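/- (Chain rule from the Leibniz rule.) Let F be an algebra of real-valued functions on an interval J, stable under composition with C² functions, and let D : F → F be a linear operator satisfying the Leibniz rule D(uv) = (Du)v + u(Dv) pointwise. Fix x₀ ∈ J and w ∈ F with w continuous at x₀. Suppose f ∈ C²(ℝ) and suppose the constant functions and the functions x ↦ f(w(x)), x ↦ w(x), and x ↦ g₂(w(x))(w(x) - w(x₀))² all lie in F, where g₂(t) = ∫₀¹(1-s)f''(w(x₀) + s(t - w(x₀)))ds, with g₂∘w and (w - w(x₀)) each in F. Then D(f∘w)(x₀) = f'(w(x₀)) · (Dw)(x₀). -/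

import Mathlib

/-!
Taylor's formula with integral remainder gives, with `c = w - w x₀`, the identity
`f ∘ w = f (w x₀) + f' (w x₀) • c + (g₂ ∘ w) * c * c` in `F`. A pointwise Leibniz operator is a
derivation of `F`, so it kills the constant term, and at `x₀` it kills the remainder because both
factors `(g₂ ∘ w) * c` and `c` vanish there.
-/

open intervalIntegral

theorem taylor_two_integral_remainder {f : ℝ → ℝ} (hf : ContDiff ℝ 2 f) (a b : ℝ) :
    f b = f a + deriv f a * (b - a) +
      (∫ s in (0:ℝ)..1, (1 - s) * deriv (deriv f) (a + s * (b - a))) * (b - a) ^ 2 := by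
  have h := map_add_eq_sum_add_integral_iteratedFDeriv (n := 1) (x := a) (y := b - a)
    fun _ _ => hf.contDiffAt
  simp only [add_sub_cancel, Nat.reduceAdd, iteratedFDeriv_apply_eq_iteratedDeriv_mul_prod,
    Finset.prod_const, Finset.card_univ, Fintype.card_fin, smul_eq_mul, Finset.sum_range_succ,
    Finset.range_one, Finset.sum_singleton, Nat.factorial_zero, Nat.cast_one, inv_one, pow_zero,
    iteratedDeriv_zero, one_mul, Nat.factorial_one, pow_one, iteratedDeriv_succ] at h
  rw [h, ← integral_mul_const]
  congr 1
  · ring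
  · congr 1 with t
    ring

namespace Derivation

variable {X R : Type*} [CommRing R] {F : Subalgebra R (X → R)}

def ofPointwiseLeibniz (D : F →ₗ[R] F)
    (hD : ∀ u v : F, (D (u * v) : X → R) = D u * v + u * D v) : Derivation R F F :=
  mk' D fun u v => Subtype.ext <| by
    rw [hD]
    simp only [smul_eq_mul, Subalgebra.coe_add, Subalgebra.coe_mul]
    ring

theorem map_mul_apply_eq_zero_of_apply_eq_zero (D : Derivation R F F) {u v : F} {x : X}
    (hu : (u : X → R) x = 0) (hv : (v : X → R) x = 0) : (D (u * v) : X → R) x = 0 := by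
  simp [D.leibniz, hu, hv]

end Derivation

theorem chain_rule_from_leibniz_general (F : Subalgebra ℝ (ℝ → ℝ))
    (D : F →ₗ[ℝ] F)
    (hD : ∀ u v : F, (D (u * v) : ℝ → ℝ) = (D u : ℝ → ℝ) * (v : ℝ → ℝ) + (u : ℝ → ℝ) * (D v : ℝ → ℝ))
    (x₀ : ℝ) (w : ℝ → ℝ) (hwF : w ∈ F)
    (f : ℝ → ℝ) (hf : ContDiff ℝ 2 f)
    (hfw : (fun x => f (w x)) ∈ F)
    (hg2w : (fun x => ∫ s in (0:ℝ)..1,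
        (1 - s) * deriv (deriv f) (w x₀ + s * (w x - w x₀))) ∈ F) :
    (D ⟨fun x => f (w x), hfw⟩ : ℝ → ℝ) x₀ =
      deriv f (w x₀) * (D ⟨w, hwF⟩ : ℝ → ℝ) x₀ := by
  set δ := Derivation.ofPointwiseLeibniz D hD
  set g : F := ⟨_, hg2w⟩
  set c : F := ⟨w, hwF⟩ - algebraMap ℝ F (w x₀)
  have hc : (c : ℝ → ℝ) x₀ = 0 := sub_self _
  have htaylor : (⟨fun x => f (w x), hfw⟩ : F) =
      algebraMap ℝ F (f (w x₀)) + deriv f (w x₀) • c + g * c * c := by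
    ext x
    simp [g, c, taylor_two_integral_remainder hf (w x₀) (w x), sq, mul_assoc]
  have hremainder : (δ (g * c * c) : ℝ → ℝ) x₀ = 0 :=
    δ.map_mul_apply_eq_zero_of_apply_eq_zero (by simp [hc]) hc
  have hδc : δ c = δ ⟨w, hwF⟩ := by
    rw [map_sub, δ.map_algebraMap, sub_zero]
  change (δ _ : ℝ → ℝ) x₀ = deriv f (w x₀) * (δ _ : ℝ → ℝ) x₀
  rw [htaylor, map_add, map_add, δ.map_algebraMap, δ.map_smul, hδc]
  simp only [zero_add, Subalgebra.coe_add, Subalgebra.coe_smul, Pi.add_apply, Pi.smul_apply,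
    smul_eq_mul, hremainder, add_zero]

/-- Chain rule from the Leibniz rule: if `D` is a linear operator on an algebra `F` of
real-valued functions satisfying the pointwise Leibniz rule, `w ∈ F` is continuous at
`x₀`, `f ∈ C²(ℝ)`, and the functions `f ∘ w`, `g₂ ∘ w`, `w - w(x₀)` and
`(g₂ ∘ w)·(w - w(x₀))²` all lie in `F`, then `D(f ∘ w)(x₀) = f'(w(x₀))·(Dw)(x₀)`. -/
theorem chain_rule_from_leibniz (F : Subalgebra ℝ (ℝ → ℝ))
    (D : F →ₗ[ℝ] F)
    (hD : ∀ u v : F, (D (u * v) : ℝ → ℝ) = (D u : ℝ → ℝ) * (v : ℝ → ℝ) + (u : ℝ → ℝ) * (D v : ℝ → ℝ))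
    (x₀ : ℝ) (w : ℝ → ℝ) (hwF : w ∈ F) (hw : ContinuousAt w x₀)
    (f : ℝ → ℝ) (hf : ContDiff ℝ 2 f)
    (hfw : (fun x => f (w x)) ∈ F)
    (hg2w : (fun x => ∫ s in (0:ℝ)..1,
        (1 - s) * deriv (deriv f) (w x₀ + s * (w x - w x₀))) ∈ F)
    (hwc : (fun x => w x - w x₀) ∈ F)
    (hprod : (fun x => (∫ s in (0:ℝ)..1,
        (1 - s) * deriv (deriv f) (w x₀ + s * (w x - w x₀))) * (w x - w x₀) ^ 2) ∈ F) :
    (D ⟨fun x => f (w x), hfw⟩ : ℝ → ℝ) x₀ =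
      deriv f (w x₀) * (D ⟨w, hwF⟩ : ℝ → ℝ) x₀ :=
  chain_rule_from_leibniz_general F D hD x₀ w hwF f hf hfw hg2w
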